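/- arXiv:quant-ph/0703046 — 2 statements merged into one kernel-verified Lean document; each statement's English description precedes it below -/
import Mathlib

section
/- Let ρ be a density operator on a 2^n-dimensional space with H_∞(ρ) ≥ t, where t ∈ ℕ. Then ρ can be written as a convex combination ρ = Σ_i p_i U_i σ U_i†, where σ is a 'flat' state (all nonzero eigenvalues equal to 2^{-t}, support of dimension 2^t) diagonal in the eigenbasis of ρ, and each U_i is a permutation matrix on the eigenbasis of ρ. -/
open Matrix BigOperators ComplexOrder

noncomputable def traceDist {d : Type*} [Fintype d] [DecidableEq d]
    (A B : Matrix d d ℂ) : ℝ :=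
  (1/2) * (((Matrix.posSemidef_conjTranspose_mul_self (A - B)).1.eigenvectorUnitary.1 *
    diagonal (((↑) : ℝ → ℂ) ∘ (√·) ∘ (Matrix.posSemidef_conjTranspose_mul_self (A - B)).1.eigenvalues) *
    (star (Matrix.posSemidef_conjTranspose_mul_self (A - B)).1.eigenvectorUnitary : Matrix d d ℂ)).trace).re

noncomputable def maxEig {d : Type*} [Fintype d] (ρ : Matrix d d ℂ) : ℝ :=
  ⨆ v : {v : d → ℂ // ∑ i, ‖v i‖ ^ 2 = 1}, (star v.1 ⬝ᵥ ρ.mulVec v.1).re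

def IsDensity {d : Type*} [Fintype d] [DecidableEq d] (ρ : Matrix d d ℂ) : Prop :=
  ρ.PosSemidef ∧ ρ.trace = 1

/-- The permutation matrix of a permutation e. -/
def permMatrix {d : Type*} [Fintype d] [DecidableEq d] (e : Equiv.Perm d) :
    Matrix d d ℂ :=
  Matrix.of fun a b => if e b = a then 1 else 0

/- ---------- auxiliary lemmas ---------- -/

lemma card_filter_lt (N K : ℕ) (hK : K ≤ N) :
    (Finset.univ.filter (fun l : Fin N => (l : ℕ) < K)).card = K := by
  have : (Finset.univ.filter (fun l : Fin N => (l : ℕ) < K))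
      = Finset.map (Fin.castLEEmb hK) Finset.univ := by
    ext l
    simp only [Finset.mem_filter, Finset.mem_univ, true_and, Finset.mem_map, Fin.castLEEmb_apply]
    constructor
    · intro h; exact ⟨⟨l, h⟩, rfl⟩
    · rintro ⟨a, rfl⟩; exact a.2
  rw [this, Finset.card_map, Finset.card_univ, Fintype.card_fin]

lemma sum_ite_lt (N K : ℕ) (hK : K ≤ N) (a b : ℝ) :
    ∑ l : Fin N, (if (l : ℕ) < K then a else b) = K * a + (N - K : ℕ) * b := by
  rw [Finset.sum_ite, Finset.sum_const, Finset.sum_const, Finset.filter_not,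
    Finset.card_sdiff_of_subset (Finset.filter_subset _ _)]
  rw [card_filter_lt N K hK, Finset.card_univ, Fintype.card_fin]
  simp [nsmul_eq_mul]

lemma flat_decomp (N K : ℕ) (hK : K ≤ N) (hK0 : 0 < K) (d : Fin N → ℝ)
    (hd0 : ∀ j, 0 ≤ d j) (hd1 : ∑ j, d j = 1) (hdK : ∀ j, d j ≤ 1 / K) :
    ∃ (m : ℕ) (p : Fin m → ℝ) (e : Fin m → Equiv.Perm (Fin N)),
      (∀ i, 0 ≤ p i) ∧ ∑ i, p i = 1 ∧
      ∀ j, d j = ∑ i, p i * (if (((e i)⁻¹ j : Fin N) : ℕ) < K then (1 / K : ℝ) else 0) := by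
  have hN0 : 0 < N := lt_of_lt_of_le hK0 hK
  have hKR : (0:ℝ) < K := by exact_mod_cast hK0
  rcases eq_or_lt_of_le hK with hKN | hKN
  · have hconst : ∀ j, d j = 1 / K := by
      have hsum : ∑ j : Fin N, (1 / (K:ℝ) - d j) = 0 := by
        rw [Finset.sum_sub_distrib, hd1, Finset.sum_const, Finset.card_univ, Fintype.card_fin,
          ← hKN]
        rw [nsmul_eq_mul, mul_one_div_cancel hKR.ne', sub_self]
      intro j
      have := (Finset.sum_eq_zero_iff_of_nonneg (fun j _ => by linarith [hdK j])).1 hsum j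
        (Finset.mem_univ j)
      linarith
    refine ⟨1, fun _ => 1, fun _ => 1, fun _ => zero_le_one, by simp, fun j => ?_⟩
    have hj : ((j : Fin N) : ℕ) < K := hKN ▸ j.2
    simp [hconst j, hj]
  · set M : Matrix (Fin N) (Fin N) ℝ :=
      fun j l => if (l : ℕ) < K then d j else (1 - K * d j) / (N - K : ℕ) with hM
    have hNKc : ((N - K : ℕ) : ℝ) = (N : ℝ) - K := Nat.cast_sub hK
    have hNK : (0:ℝ) < ((N - K : ℕ) : ℝ) := by
      have : 0 < N - K := Nat.sub_pos_of_lt hKN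
      exact_mod_cast this
    have hKd : ∀ j, (K:ℝ) * d j ≤ 1 := by
      intro j
      have h2 := hdK j
      rw [le_div_iff₀ hKR] at h2
      nlinarith [h2]
    have hMds : M ∈ doublyStochastic ℝ (Fin N) := by
      rw [mem_doublyStochastic_iff_sum]
      refine ⟨fun i j => ?_, fun i => ?_, fun l => ?_⟩
      · dsimp [M]
        split
        · exact hd0 i
        · exact div_nonneg (by linarith [hKd i]) hNK.le
      · dsimp [M]
        rw [sum_ite_lt N K hK]
        rw [mul_div_cancel₀ _ hNK.ne']
        ring
      · dsimp [M]
        split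
        · simpa using hd1
        · rw [← Finset.sum_div, Finset.sum_sub_distrib, ← Finset.mul_sum, hd1,
            Finset.sum_const, Finset.card_univ, Fintype.card_fin, hNKc]
          rw [div_eq_one_iff_eq (by linarith)]
          ring
    obtain ⟨w, hw0, hw1, hw2⟩ := exists_eq_sum_perm_of_mem_doublyStochastic hMds
    set f0 : Fin N → ℝ := fun l => if (l : ℕ) < K then (1 / K : ℝ) else 0 with hf0
    have key : ∀ j, d j = ∑ σ : Equiv.Perm (Fin N), w σ * f0 (σ j) := by
      intro j
      have hMe : ∀ l, M j l = ∑ σ : Equiv.Perm (Fin N), (if σ j = l then w σ else 0) := by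
        intro l
        rw [← hw2]
        simp [Matrix.sum_apply, Matrix.smul_apply, PEquiv.toMatrix_apply,
          Equiv.toPEquiv_apply, mul_ite, mul_one, mul_zero]
      have e1 : ∑ l : Fin N, M j l * f0 l = d j := by
        have he : ∀ l : Fin N, M j l * f0 l = if (l : ℕ) < K then d j / K else 0 := by
          intro l; dsimp [M, f0]; split <;> simp [div_eq_mul_inv]
        rw [Finset.sum_congr rfl fun l _ => he l, sum_ite_lt N K hK]
        field_simp
        simp
      calc d j = ∑ l : Fin N, M j l * f0 l := e1.symm
        _ = ∑ l : Fin N, ∑ σ : Equiv.Perm (Fin N), (if σ j = l then w σ * f0 l else 0) := by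
            refine Finset.sum_congr rfl fun l _ => ?_
            rw [hMe l, Finset.sum_mul]
            exact Finset.sum_congr rfl fun σ _ => by rw [ite_mul, zero_mul]
        _ = ∑ σ : Equiv.Perm (Fin N), ∑ l : Fin N, (if σ j = l then w σ * f0 l else 0) :=
            Finset.sum_comm
        _ = ∑ σ : Equiv.Perm (Fin N), w σ * f0 (σ j) := by
            refine Finset.sum_congr rfl fun σ _ => ?_
            simp [Finset.sum_ite_eq]
    set m := Fintype.card (Equiv.Perm (Fin N)) with hm
    set φ : Fin m ≃ Equiv.Perm (Fin N) := (Fintype.equivFin (Equiv.Perm (Fin N))).symm with hφ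
    refine ⟨m, fun i => w (φ i), fun i => (φ i)⁻¹, fun i => hw0 _, ?_, fun j => ?_⟩
    · rw [← hw1]; exact Fintype.sum_equiv φ _ _ fun i => rfl
    · rw [key j]
      refine (Fintype.sum_equiv φ _ _ fun i => ?_).symm
      simp [f0]

lemma quad_bound {d : Type*} [Fintype d] (ρ : Matrix d d ℂ) (v : d → ℂ)
    (hv : ∑ i, ‖v i‖ ^ 2 = 1) :
    (star v ⬝ᵥ ρ.mulVec v).re ≤ ∑ a : d, ∑ b : d, ‖ρ a b‖ := by
  have hle1 : ∀ i, ‖v i‖ ≤ 1 := by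
    intro i
    have h2 : ‖v i‖ ^ 2 ≤ 1 := by
      rw [← hv]
      exact Finset.single_le_sum (fun j _ => sq_nonneg ‖v j‖) (Finset.mem_univ i)
    nlinarith [norm_nonneg (v i)]
  calc (star v ⬝ᵥ ρ.mulVec v).re ≤ ‖star v ⬝ᵥ ρ.mulVec v‖ :=
        Complex.re_le_norm _
    _ = ‖∑ a, star (v a) * (ρ.mulVec v a)‖ := by rfl
    _ ≤ ∑ a, ‖star (v a) * (ρ.mulVec v a)‖ := norm_sum_le _ _
    _ ≤ ∑ a : d, ∑ b : d, ‖ρ a b‖ := by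
        refine Finset.sum_le_sum fun a _ => ?_
        rw [norm_mul, norm_star]
        calc ‖v a‖ * ‖ρ.mulVec v a‖ ≤ 1 * ‖ρ.mulVec v a‖ :=
              mul_le_mul_of_nonneg_right (hle1 a) (norm_nonneg _)
          _ = ‖∑ b, ρ a b * v b‖ := by rw [one_mul]; rfl
          _ ≤ ∑ b, ‖ρ a b * v b‖ := norm_sum_le _ _
          _ ≤ ∑ b, ‖ρ a b‖ := by
              refine Finset.sum_le_sum fun b _ => ?_
              rw [norm_mul]
              calc ‖ρ a b‖ * ‖v b‖ ≤ ‖ρ a b‖ * 1 :=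
                    mul_le_mul_of_nonneg_left (hle1 b) (norm_nonneg _)
                _ = ‖ρ a b‖ := mul_one _

lemma permMatrix_conj_diagonal {d : Type*} [Fintype d] [DecidableEq d]
    (e : Equiv.Perm d) (f : d → ℂ) :
    permMatrix e * Matrix.diagonal f * (permMatrix e)ᴴ
      = Matrix.diagonal (fun j => f (e⁻¹ j)) := by
  ext a c
  rw [Matrix.mul_apply]
  simp only [Matrix.mul_diagonal, Matrix.conjTranspose_apply, permMatrix, Matrix.of_apply]
  rw [Finset.sum_eq_single (e⁻¹ a)]
  · by_cases hac : a = c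
    · subst hac
      simp [Matrix.diagonal_apply_eq]
    · have h1 : ¬ (e (e⁻¹ a) = c) := by
        rw [show e (e⁻¹ a) = a from e.apply_symm_apply a]; exact hac
      simp [h1, hac, Matrix.diagonal_apply_ne _ hac]
  · intro b _ hb
    have : ¬ (e b = a) := fun h => hb (by rw [← h, show e⁻¹ (e b) = b from e.symm_apply_apply b])
    simp [this]
  · intro h
    exact absurd (Finset.mem_univ _) h

/-- A density operator ρ on a 2^n-dimensional space with
H_∞(ρ) ≥ t is a convex combination ρ = Σᵢ pᵢ Uᵢ σ Uᵢᴴ where σ is a t-flat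
state (eigenvalues 2^(-t) on a support of dimension 2^t) diagonal in the
eigenbasis of ρ, and each Uᵢ is a permutation matrix on that eigenbasis. -/
theorem quantum_flat_decomposition
    {n : ℕ} (t : ℕ) (ht : t ≤ n)
    (ρ : Matrix (Fin (2 ^ n)) (Fin (2 ^ n)) ℂ) (hρ : IsDensity ρ)
    (hmin : maxEig ρ ≤ (2 : ℝ) ^ (-(t : ℝ))) :
    ∃ (V : Matrix.unitaryGroup (Fin (2 ^ n)) ℂ) (dvec : Fin (2 ^ n) → ℝ),
      ρ = V.1 * Matrix.diagonal (fun j => (dvec j : ℂ)) * star V.1 ∧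
      ∃ (m : ℕ) (p : Fin m → ℝ) (e : Fin m → Equiv.Perm (Fin (2 ^ n))),
        (∀ i, 0 ≤ p i) ∧ ∑ i, p i = 1 ∧
        ρ = ∑ i, p i •
          ((V.1 * permMatrix (e i) * star V.1) *
            (V.1 * Matrix.diagonal
              (fun j : Fin (2 ^ n) => if (j : ℕ) < 2 ^ t then ((2 : ℂ) ^ t)⁻¹ else 0) * star V.1) *
           (V.1 * permMatrix (e i) * star V.1)ᴴ) := by
  obtain ⟨hpsd, htr⟩ := hρ
  have hH : ρ.IsHermitian := hpsd.1
  have hKN : 2 ^ t ≤ 2 ^ n := Nat.pow_le_pow_right (by norm_num) ht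
  have hK0 : 0 < 2 ^ t := Nat.pow_pos (by norm_num)
  set V : Matrix.unitaryGroup (Fin (2 ^ n)) ℂ := Matrix.IsHermitian.eigenvectorUnitary hH with hV
  set U : Matrix (Fin (2 ^ n)) (Fin (2 ^ n)) ℂ := V.1 with hU
  set dvec : Fin (2 ^ n) → ℝ := hH.eigenvalues with hdvec
  have hUstar : star U * U = 1 := Unitary.coe_star_mul_self V
  have hspec : ρ = U * Matrix.diagonal (fun j => (dvec j : ℂ)) * star U :=
    hH.spectral_theorem
  -- sum of eigenvalues is 1
  have hsum : ∑ j, dvec j = 1 := by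
    have h1 : ρ.trace = Matrix.trace (Matrix.diagonal (fun j => (dvec j : ℂ))) := by
      rw [hspec, Matrix.trace_mul_comm (U * Matrix.diagonal (fun j => (dvec j : ℂ))) (star U),
        ← Matrix.mul_assoc, hUstar, Matrix.one_mul]
    rw [htr, Matrix.trace_diagonal] at h1
    have : ((1 : ℝ) : ℂ) = ((∑ j, dvec j : ℝ) : ℂ) := by
      push_cast
      exact h1
    exact_mod_cast this.symm
  -- eigenvalues nonneg
  have h0 : ∀ j, 0 ≤ dvec j := hpsd.eigenvalues_nonneg
  -- eigenvalues bounded by 1/K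
  have hbd : ∀ j, dvec j ≤ 1 / ((2 ^ t : ℕ) : ℝ) := by
    intro j
    have hrpow : (2 : ℝ) ^ (-(t : ℝ)) = 1 / ((2 ^ t : ℕ) : ℝ) := by
      rw [Real.rpow_neg (by norm_num), Real.rpow_natCast, one_div]
      push_cast
      norm_num
    set v : Fin (2 ^ n) → ℂ := ⇑(hH.eigenvectorBasis j) with hv
    have hvnorm : ∑ i, ‖v i‖ ^ 2 = 1 := by
      have h1 : ‖hH.eigenvectorBasis j‖ = 1 := hH.eigenvectorBasis.orthonormal.1 j
      have h2 := congrArg (· ^ 2) h1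
      rw [EuclideanSpace.norm_eq] at h2
      simpa [Real.sq_sqrt (Finset.sum_nonneg fun i _ => sq_nonneg _)] using h2
    have hval : dvec j = (star v ⬝ᵥ ρ.mulVec v).re := hH.eigenvalues_eq j
    have hle : dvec j ≤ maxEig ρ := by
      rw [hval]
      have hbdd : BddAbove (Set.range fun w : {w : Fin (2 ^ n) → ℂ // ∑ i, ‖w i‖ ^ 2 = 1} =>
          (star w.1 ⬝ᵥ ρ.mulVec w.1).re) := by
        refine ⟨∑ a : Fin (2 ^ n), ∑ b : Fin (2 ^ n), ‖ρ a b‖, ?_⟩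
        rintro x ⟨w, rfl⟩
        exact quad_bound ρ w.1 w.2
      exact le_ciSup hbdd ⟨v, hvnorm⟩
    calc dvec j ≤ maxEig ρ := hle
      _ ≤ (2 : ℝ) ^ (-(t : ℝ)) := hmin
      _ = 1 / ((2 ^ t : ℕ) : ℝ) := hrpow
  obtain ⟨m, p, e, hp0, hp1, hpe⟩ := flat_decomp (2 ^ n) (2 ^ t) hKN hK0 dvec h0 hsum hbd
  refine ⟨V, dvec, hspec, m, p, e, hp0, hp1, ?_⟩
  set Fc : Fin (2 ^ n) → ℂ := fun j => if (j : ℕ) < 2 ^ t then ((2 : ℂ) ^ t)⁻¹ else 0 with hFc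
  have cancel : ∀ X : Matrix (Fin (2 ^ n)) (Fin (2 ^ n)) ℂ, star U * (U * X) = X := by
    intro X
    rw [← Matrix.mul_assoc, hUstar, Matrix.one_mul]
  have hsummand : ∀ i : Fin m,
      (U * permMatrix (e i) * star U) * (U * Matrix.diagonal Fc * star U) *
        (U * permMatrix (e i) * star U)ᴴ
      = U * Matrix.diagonal (fun j => Fc ((e i)⁻¹ j)) * star U := by
    intro i
    have hct : (U * permMatrix (e i) * star U)ᴴ = U * (permMatrix (e i))ᴴ * star U := by
      simp [Matrix.conjTranspose_mul, Matrix.star_eq_conjTranspose, Matrix.mul_assoc]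
    rw [hct, ← permMatrix_conj_diagonal (e i) Fc]
    simp only [Matrix.mul_assoc, cancel]
  rw [Finset.sum_congr rfl fun i _ => congrArg (p i • ·) (hsummand i)]
  have hdiagsmul : ∀ (r : ℝ) (g : Fin (2 ^ n) → ℂ),
      r • Matrix.diagonal g = Matrix.diagonal (fun j => (r : ℂ) * g j) := by
    intro r g
    ext a b
    by_cases hab : a = b
    · subst hab
      simp [Matrix.diagonal_apply_eq, Complex.real_smul]
    · simp [Matrix.diagonal_apply_ne _ hab]
  have hsmul : ∀ i : Fin m, p i • (U * Matrix.diagonal (fun j => Fc ((e i)⁻¹ j)) * star U)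
      = U * Matrix.diagonal (fun j => (p i : ℂ) * Fc ((e i)⁻¹ j)) * star U := by
    intro i
    rw [← Matrix.smul_mul, ← Matrix.mul_smul, hdiagsmul]
  rw [Finset.sum_congr rfl fun i _ => hsmul i]
  rw [← Finset.sum_mul, ← Finset.mul_sum]
  have hdiagsum : ∑ i : Fin m, Matrix.diagonal (fun j => (p i : ℂ) * Fc ((e i)⁻¹ j))
      = Matrix.diagonal (fun j => ∑ i : Fin m, (p i : ℂ) * Fc ((e i)⁻¹ j)) := by
    ext a b
    by_cases hab : a = b
    · subst hab
      simp [Matrix.sum_apply, Matrix.diagonal_apply_eq]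
    · simp [Matrix.sum_apply, Matrix.diagonal_apply_ne _ hab]
  rw [hdiagsum]
  have hdd : (fun j => ((dvec j : ℝ) : ℂ))
      = (fun j => ∑ i : Fin m, (p i : ℂ) * Fc ((e i)⁻¹ j)) := by
    funext j
    rw [hpe j]
    push_cast
    refine Finset.sum_congr rfl fun i _ => ?_
    congr 1
    dsimp [Fc]
    split
    · rw [one_div]
      push_cast
      norm_num
    · norm_num
  rw [hspec, hdd]
end

section
/- Let ρ be a density operator with H_∞(ρ) ≥ t on a 2^n-dimensional space, written as ρ = r₀τ₀ + r₁τ₁ with r₀ + r₁ = 1, r₀, r₁ ≥ 0 and τ₀, τ₁ density operators, and suppose τ₀ commutes with I/2^n (trivially true). Define τ₀' = r₀τ₀ + r₁(I/2^n) and ρ' = r₀ρ + r₁(I/2^n). Then H_∞(ρ') ≥ t and H_∞(τ₀') ≥ t − 1. -/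
open Matrix BigOperators ComplexOrder

section helpers

variable {d : Type*} [Fintype d] [DecidableEq d]

lemma quad_le_sum_norm (M : Matrix d d ℂ) (v : d → ℂ) (hv : ∑ i, ‖v i‖ ^ 2 = 1) :
    (star v ⬝ᵥ M.mulVec v).re ≤ ∑ i, ∑ j, ‖M i j‖ := by
  have hvi : ∀ i, ‖v i‖ ≤ 1 := by
    intro i
    have h1 : ‖v i‖ ^ 2 ≤ 1 := by
      rw [← hv]
      exact Finset.single_le_sum (f := fun j => ‖v j‖ ^ 2)
        (fun j _ => sq_nonneg _) (Finset.mem_univ i)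
    nlinarith [norm_nonneg (v i)]
  calc (star v ⬝ᵥ M.mulVec v).re ≤ ‖star v ⬝ᵥ M.mulVec v‖ := Complex.re_le_norm _
    _ ≤ ∑ i, ∑ j, ‖M i j‖ := by
        rw [dotProduct]
        refine (norm_sum_le _ _).trans (Finset.sum_le_sum fun i _ => ?_)
        rw [Matrix.mulVec, dotProduct, Finset.mul_sum]
        refine (norm_sum_le _ _).trans (Finset.sum_le_sum fun j _ => ?_)
        rw [norm_mul, norm_mul]
        simp only [Pi.star_apply, RCLike.star_def, RCLike.norm_conj]
        calc ‖v i‖ * (‖M i j‖ * ‖v j‖) ≤ 1 * (‖M i j‖ * 1) := by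
              apply mul_le_mul (hvi i) _ (by positivity) zero_le_one
              exact mul_le_mul_of_nonneg_left (hvi j) (norm_nonneg _)
          _ = ‖M i j‖ := by ring

lemma quad_bdd (M : Matrix d d ℂ) :
    BddAbove (Set.range fun v : {v : d → ℂ // ∑ i, ‖v i‖ ^ 2 = 1} =>
      (star v.1 ⬝ᵥ M.mulVec v.1).re) := by
  refine ⟨∑ i, ∑ j, ‖M i j‖, ?_⟩
  rintro x ⟨v, rfl⟩
  exact quad_le_sum_norm M v.1 v.2

lemma maxEig_le_of_forall [Nonempty d] (M : Matrix d d ℂ) (c : ℝ)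
    (h : ∀ v : d → ℂ, ∑ i, ‖v i‖ ^ 2 = 1 → (star v ⬝ᵥ M.mulVec v).re ≤ c) :
    maxEig M ≤ c := by
  have : Nonempty {v : d → ℂ // ∑ i, ‖v i‖ ^ 2 = 1} := by
    refine ⟨⟨Pi.single (Classical.arbitrary d) 1, ?_⟩⟩
    simp [Pi.single_apply, apply_ite]
  exact ciSup_le fun v => h v.1 v.2

lemma le_maxEig (M : Matrix d d ℂ) (v : d → ℂ) (hv : ∑ i, ‖v i‖ ^ 2 = 1) :
    (star v ⬝ᵥ M.mulVec v).re ≤ maxEig M :=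
  le_ciSup (quad_bdd M) ⟨v, hv⟩

end helpers

/-- Let ρ = r₀τ₀ + r₁τ₁ be a density operator on a 2^n-dimensional
space with H_∞(ρ) ≥ t (t ≤ n). Define τ₀' = r₀τ₀ + r₁(I/2^n) and
ρ' = r₀ρ + r₁(I/2^n). Then H_∞(ρ') ≥ t and H_∞(τ₀') ≥ t − 1. -/
theorem padding_min_entropy
    {n : ℕ} (t : ℝ) (ht : t ≤ n)
    (ρ τ₀ τ₁ : Matrix (Fin (2 ^ n)) (Fin (2 ^ n)) ℂ)
    (r₀ r₁ : ℝ) (hr₀ : 0 ≤ r₀) (hr₁ : 0 ≤ r₁) (hr : r₀ + r₁ = 1)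
    (hρ : IsDensity ρ) (hτ₀ : IsDensity τ₀) (hτ₁ : IsDensity τ₁)
    (hdecomp : ρ = r₀ • τ₀ + r₁ • τ₁)
    (hmin : maxEig ρ ≤ (2 : ℝ) ^ (-t)) :
    maxEig (r₀ • ρ + r₁ • (((2 : ℂ) ^ n)⁻¹ • 1)) ≤ (2 : ℝ) ^ (-t) ∧
    maxEig (r₀ • τ₀ + r₁ • (((2 : ℂ) ^ n)⁻¹ • 1)) ≤ (2 : ℝ) ^ (-(t - 1)) := by
  have hN : Nonempty (Fin (2 ^ n)) := ⟨⟨0, Nat.pow_pos (by norm_num)⟩⟩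
  -- quadratic form of c • 1
  have hid : ∀ v : Fin (2 ^ n) → ℂ, ∑ i, ‖v i‖ ^ 2 = 1 →
      (star v ⬝ᵥ ((((2 : ℂ) ^ n)⁻¹ • 1 : Matrix (Fin (2^n)) (Fin (2^n)) ℂ)).mulVec v).re
        = ((2 : ℝ) ^ n)⁻¹ := by
    intro v hv
    rw [Matrix.smul_mulVec, Matrix.one_mulVec, dotProduct_smul]
    have : (star v ⬝ᵥ v) = ((∑ i, ‖v i‖ ^ 2 : ℝ) : ℂ) := by
      rw [dotProduct]
      push_cast
      refine Finset.sum_congr rfl fun i _ => ?_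
      simp [Pi.star_apply, RCLike.star_def, Complex.conj_mul', Complex.sq_norm]
    rw [this, hv, Complex.ofReal_one, smul_eq_mul, mul_one,
      show ((2:ℂ)^n)⁻¹ = ((((2:ℝ)^n)⁻¹ : ℝ) : ℂ) by push_cast; ring]
    exact Complex.ofReal_re _
  have h2n : ((2 : ℝ) ^ n)⁻¹ ≤ (2 : ℝ) ^ (-t) := by
    have : ((2 : ℝ) ^ n)⁻¹ = (2 : ℝ) ^ (-(n : ℝ)) := by
      rw [← Real.rpow_natCast 2 n, ← Real.rpow_neg (by norm_num)]
    rw [this]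
    exact Real.rpow_le_rpow_left_iff (x := 2) (by norm_num) |>.mpr (by linarith)
  constructor
  · apply maxEig_le_of_forall
    intro v hv
    rw [Matrix.add_mulVec, dotProduct_add, Complex.add_re,
      Matrix.smul_mulVec, dotProduct_smul, Matrix.smul_mulVec, dotProduct_smul]
    have h1 : (r₀ • (star v ⬝ᵥ ρ.mulVec v)).re = r₀ * (star v ⬝ᵥ ρ.mulVec v).re := by
      simp [Complex.smul_re, smul_eq_mul]
    have h2 : (r₁ • (star v ⬝ᵥ ((((2:ℂ)^n)⁻¹ • 1 : Matrix _ _ ℂ)).mulVec v)).re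
        = r₁ * ((2:ℝ)^n)⁻¹ := by
      rw [Complex.smul_re, hid v hv, smul_eq_mul]
    rw [h1, h2]
    have h3 : (star v ⬝ᵥ ρ.mulVec v).re ≤ (2:ℝ)^(-t) := (le_maxEig ρ v hv).trans hmin
    have e : r₀ * (2:ℝ)^(-t) + r₁ * (2:ℝ)^(-t) = (2:ℝ)^(-t) := by
      rw [← add_mul, hr, one_mul]
    linarith [mul_le_mul_of_nonneg_left h3 hr₀, mul_le_mul_of_nonneg_left h2n hr₁]
  · apply maxEig_le_of_forall
    intro v hv
    rw [Matrix.add_mulVec, dotProduct_add, Complex.add_re,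
      Matrix.smul_mulVec, dotProduct_smul, Matrix.smul_mulVec, dotProduct_smul]
    have h1 : (r₀ • (star v ⬝ᵥ τ₀.mulVec v)).re = r₀ * (star v ⬝ᵥ τ₀.mulVec v).re := by
      simp [Complex.smul_re, smul_eq_mul]
    have h2 : (r₁ • (star v ⬝ᵥ ((((2:ℂ)^n)⁻¹ • 1 : Matrix _ _ ℂ)).mulVec v)).re
        = r₁ * ((2:ℝ)^n)⁻¹ := by
      rw [Complex.smul_re, hid v hv, smul_eq_mul]
    rw [h1, h2]
    -- r₀ * quad(τ₀) ≤ quad(ρ)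
    have hpos : 0 ≤ (star v ⬝ᵥ τ₁.mulVec v).re := by
      have := hτ₁.1.dotProduct_mulVec_nonneg v
      exact (Complex.le_def.mp this).1
    have hquadρ : (star v ⬝ᵥ ρ.mulVec v).re
        = r₀ * (star v ⬝ᵥ τ₀.mulVec v).re + r₁ * (star v ⬝ᵥ τ₁.mulVec v).re := by
      rw [hdecomp, Matrix.add_mulVec, dotProduct_add, Complex.add_re,
        Matrix.smul_mulVec, dotProduct_smul, Matrix.smul_mulVec, dotProduct_smul,
        Complex.smul_re, Complex.smul_re, smul_eq_mul, smul_eq_mul]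
    have h3 : (star v ⬝ᵥ ρ.mulVec v).re ≤ (2:ℝ)^(-t) := (le_maxEig ρ v hv).trans hmin
    have key : r₀ * (star v ⬝ᵥ τ₀.mulVec v).re ≤ (2:ℝ)^(-t) := by
      nlinarith
    have hfin : (2:ℝ)^(-(t-1)) = (2:ℝ)^(-t) + (2:ℝ)^(-t) := by
      rw [show -(t-1) = -t + 1 by ring, Real.rpow_add (by norm_num), Real.rpow_one]
      ring
    rw [hfin]
    have h4 : r₁ * ((2:ℝ)^n)⁻¹ ≤ (2:ℝ)^(-t) := by
      have := mul_le_mul_of_nonneg_left h2n hr₁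
      have hle1 : r₁ ≤ 1 := by linarith
      have hpos' : (0:ℝ) ≤ (2:ℝ)^(-t) := le_of_lt (Real.rpow_pos_of_pos (by norm_num) _)
      nlinarith
    linarith
end
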